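/- arXiv:1804.06952 — 7 statements merged into one kernel-verified Lean document; each statement's English description precedes it below -/
import Mathlib

section
/- Let k, ℓ, n be positive integers with 2^ℓ < k. Then there is no ℓ-bit public-coin SMP perfect simulation of distributions on [k] with n players: for every seed distribution ν on a type U, every family of message maps π_j : U → Fin k → Fin 2^ℓ (j ∈ [n]), and every referee rule δ : U → (Fin n → Fin 2^ℓ) → PMF (Option (Fin k)), there exists a distribution p on [k] and an element x ∈ [k] such that the probability that the referee's output X̂ equals x (when X_1,…,X_n are i.i.d. from p, independent of the seed u ~ ν) differs from p_x. -/
/-!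
Fix a seed `u` of positive probability. Since `2^ℓ < k`, every message map `π j u` identifies two
symbols, so there is a message vector `c` such that for every outcome `o`, some sample vector
avoiding `o` is sent as `c`. Under the uniform distribution on the symbols other than `o`, a perfect
simulation outputs `o` with probability `0` while that sample vector has positive probability, so
`δ u c o = 0`. This holds for every `o`, contradicting that `δ u c` is a distribution.
-/

open scoped BigOperators ENNReal

/-- Output distribution of a public-coin SMP simulation protocol: seed distribution `ν`,
message maps `π`, referee rule `δ`; i.i.d. samples from `p`. -/
noncomputable def simOut {k l n : ℕ} {U : Type} (ν : PMF U)
    (π : Fin n → U → Fin k → Fin (2 ^ l))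
    (δ : U → (Fin n → Fin (2 ^ l)) → PMF (Option (Fin k)))
    (p : PMF (Fin k)) (o : Option (Fin k)) : ℝ≥0∞ :=
  ∑' u : U, ν u * ∑ xs : Fin n → Fin k,
    (∏ j : Fin n, p (xs j)) * δ u (fun j => π j u (xs j)) o

lemma PMF.sum_coe {α : Type*} [Fintype α] (p : PMF α) : ∑ a, p a = 1 := by
  simpa [tsum_fintype] using p.tsum_coe

lemma PMF.sum_pi_prod_coe {α : Type*} [Fintype α] (p : PMF α) (n : ℕ) :
    ∑ xs : Fin n → α, ∏ j, p (xs j) = 1 := by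
  rw [← Fintype.sum_pow, p.sum_coe, one_pow]

lemma exists_forall_exists_ne_map_eq {α β : Type*} [Fintype α] [Fintype β]
    (h : Fintype.card β < Fintype.card α) (f : α → β) :
    ∃ c, ∀ x, ∃ y ≠ x, f y = c := by
  obtain ⟨a, b, hab, hfab⟩ := Fintype.exists_ne_map_eq_of_card_lt f h
  refine ⟨f a, fun x => ?_⟩
  by_cases hax : a = x
  · exact ⟨b, hax ▸ hab.symm, hfab.symm⟩
  · exact ⟨a, hax, rfl⟩

section Simulation

variable {k l n : ℕ} {U : Type} (ν : PMF U) (π : Fin n → U → Fin k → Fin (2 ^ l))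
  (δ : U → (Fin n → Fin (2 ^ l)) → PMF (Option (Fin k)))

def IsPerfectSimulation : Prop :=
  ∀ (p : PMF (Fin k)) (x : Fin k), simOut ν π δ p (some x) = p x

lemma sum_simOut (p : PMF (Fin k)) : ∑ o, simOut ν π δ p o = 1 := by
  simp only [simOut]
  rw [← Summable.tsum_finsetSum fun _ _ => ENNReal.summable]
  calc ∑' u, ∑ o, ν u * ∑ xs : Fin n → Fin k, (∏ j, p (xs j)) * δ u (fun j => π j u (xs j)) o
      = ∑' u, ν u := by
        refine tsum_congr fun u => ?_
        rw [← Finset.mul_sum, Finset.sum_comm]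
        simp_rw [← Finset.mul_sum, PMF.sum_coe, mul_one, p.sum_pi_prod_coe, mul_one]
    _ = 1 := ν.tsum_coe

variable {ν π δ}

lemma referee_eq_zero_of_simOut_eq_zero {p : PMF (Fin k)} {o : Option (Fin k)}
    (h : simOut ν π δ p o = 0) {u : U} (hu : ν u ≠ 0) {xs : Fin n → Fin k}
    (hxs : ∀ j, p (xs j) ≠ 0) :
    δ u (fun j => π j u (xs j)) o = 0 := by
  simp only [simOut, ENNReal.tsum_eq_zero, mul_eq_zero, Finset.sum_eq_zero_iff,
    Finset.mem_univ, true_implies] at h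
  exact ((h u).resolve_left hu xs).resolve_left (Finset.prod_ne_zero_iff.2 fun j _ => hxs j)

lemma IsPerfectSimulation.simOut_none (hsim : IsPerfectSimulation ν π δ) (p : PMF (Fin k)) :
    simOut ν π δ p none = 0 := by
  have h := sum_simOut ν π δ p
  rw [Fintype.sum_option, Finset.sum_congr rfl fun x _ => hsim p x, p.sum_coe] at h
  simpa using h

lemma IsPerfectSimulation.simOut_eq_zero (hsim : IsPerfectSimulation ν π δ)
    {p : PMF (Fin k)} {o : Option (Fin k)} (hp : ∀ x, some x = o → p x = 0) :
    simOut ν π δ p o = 0 := by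
  cases o with
  | none => exact hsim.simOut_none p
  | some x => exact (hsim p x).trans (hp x rfl)

lemma IsPerfectSimulation.referee_eq_zero [Nontrivial (Fin k)] (hsim : IsPerfectSimulation ν π δ)
    {u : U} (hu : ν u ≠ 0) {o : Option (Fin k)} {xs : Fin n → Fin k}
    (hxs : ∀ j, some (xs j) ≠ o) :
    δ u (fun j => π j u (xs j)) o = 0 := by
  set S := Finset.univ.filter fun y : Fin k => some y ≠ o
  have hS : S.Nonempty := by
    cases o with
    | none => exact ⟨Classical.arbitrary _, by simp [S]⟩
    | some x => obtain ⟨y, hy⟩ := exists_ne x; exact ⟨y, by simpa [S] using hy⟩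
  refine referee_eq_zero_of_simOut_eq_zero (p := PMF.uniformOfFinset S hS)
    (hsim.simOut_eq_zero fun x hx => ?_) hu fun j => ?_
  · exact PMF.uniformOfFinset_apply_of_notMem hS (by simp [S, hx])
  · exact (PMF.mem_support_uniformOfFinset_iff hS _).2 (by simp [S, hxs j])

theorem not_isPerfectSimulation (hlt : 2 ^ l < k) : ¬ IsPerfectSimulation ν π δ := by
  intro hsim
  have : Nontrivial (Fin k) := Fin.nontrivial_iff_two_le.2 (Nat.one_le_two_pow.trans_lt hlt)
  obtain ⟨u, hu⟩ := ν.support_nonempty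
  choose c hc using fun j => exists_forall_exists_ne_map_eq (by simpa using hlt) (π j u)
  have hzero : ∀ o, δ u c o = 0 := by
    intro o
    have hsample : ∀ j, ∃ y, some y ≠ o ∧ π j u y = c j := fun j => by
      cases o with
      | none => obtain ⟨y, -, hy⟩ := hc j (Classical.arbitrary _); exact ⟨y, by simp, hy⟩
      | some x => obtain ⟨y, hyx, hy⟩ := hc j x; exact ⟨y, by simpa using hyx, hy⟩
    choose xs hxs hmsg using hsample
    simpa only [hmsg] using hsim.referee_eq_zero hu hxs
  simpa [hzero] using (δ u c).tsum_coe

end Simulation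

theorem no_perfect_simulation_general (k l n : ℕ)
    (hlt : 2 ^ l < k)
    (U : Type) (ν : PMF U)
    (π : Fin n → U → Fin k → Fin (2 ^ l))
    (δ : U → (Fin n → Fin (2 ^ l)) → PMF (Option (Fin k))) :
    ∃ (p : PMF (Fin k)) (x : Fin k), simOut ν π δ p (some x) ≠ p x := by
  by_contra h
  push Not at h
  exact not_isPerfectSimulation hlt h

/-- For `2^ℓ < k`, no ℓ-bit public-coin SMP protocol with `n` players is a perfect
simulation of distributions on `[k]`: there is some distribution `p` and some `x`
for which the output probability of `x` differs from `p x`. -/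
theorem no_perfect_simulation (k l n : ℕ) (hk : 0 < k) (hl : 0 < l) (hn : 0 < n)
    (hlt : 2 ^ l < k)
    (U : Type) (ν : PMF U)
    (π : Fin n → U → Fin k → Fin (2 ^ l))
    (δ : U → (Fin n → Fin (2 ^ l)) → PMF (Option (Fin k))) :
    ∃ (p : PMF (Fin k)) (x : Fin k), simOut ν π δ p (some x) ≠ p x :=
  no_perfect_simulation_general k l n hlt U ν π δ
end

section
/- Let n ≥ 1. There is no 1-bit (ℓ = 1) public-coin SMP protocol with n players, referee rule δ, and nonempty set O of distributions on {0,1,2}, open in the subspace topology of {p ∈ ℝ³ : p_0, p_1, p_2 > 0, p_0 + p_1 + p_2 = 1} (the interior of the probability simplex), such that for every p ∈ O and every x ∈ {0,1,2}, the probability that the referee's output X̂ equals x is exactly p_x. That is, perfect 1-bit simulation of 3-ary distributions is impossible even under the promise that the input distribution comes from an arbitrary open set in the interior of the simplex. -/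
/-!
The output probabilities are polynomials in `p`: `∑ xs, (∏ j, p (xs j)) * c xs x`, where `c xs`
is the seed-averaged output law of the referee on the input tuple `xs`. Agreeing with `p x` on an
open piece of the simplex, they agree with it on the whole plane `∑ i, p i = 1` by analytic
continuation. At the point with `p x = 0` and the other coordinates `1/2` this forces `c xs x = 0`
for every tuple `xs` avoiding `x`; at the uniform point it forces `c xs ⊥ = 0`. But for a seed in
the support, each player's one-bit message map merges two of the three symbols, so the messages
of some tuple are, for every `x`, also those of a tuple avoiding `x`. Whatever the referee outputs
with positive probability on these messages contradicts one of the two facts.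
-/

open scoped BigOperators ENNReal

/-- The interior of the probability simplex on `{0,1,2}`:
vectors with strictly positive coordinates summing to `1`. -/
def simplexInterior3 : Set (Fin 3 → ℝ) :=
  {p | (∀ i, 0 < p i) ∧ ∑ i, p i = 1}

/-- Probability that the referee of a 1-bit public-coin SMP simulation protocol
(with seed distribution `ν`, message maps `π`, referee rule `δ`) outputs `x`, when the
`n` players hold i.i.d. samples from the distribution `p` on `{0,1,2}`. -/
noncomputable def simOutReal3 {n : ℕ} {U : Type} (ν : PMF U)
    (π : Fin n → U → Fin 3 → Fin 2)
    (δ : U → (Fin n → Fin 2) → PMF (Option (Fin 3)))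
    (p : Fin 3 → ℝ) (x : Fin 3) : ℝ :=
  ∑' u : U, (ν u).toReal * ∑ xs : Fin n → Fin 3,
    (∏ j : Fin n, p (xs j)) * (δ u (fun j => π j u (xs j)) (some x)).toReal

open Set Filter Topology

lemma PMF.toReal_bind_apply {α β : Type*} (ν : PMF α) (f : α → PMF β) (b : β) :
    (ν.bind f b).toReal = ∑' a, (ν a).toReal * (f a b).toReal := by
  rw [PMF.bind_apply, ENNReal.tsum_toReal_eq fun a =>
    ENNReal.mul_ne_top (ν.apply_ne_top a) ((f a).apply_ne_top b)]
  simp only [ENNReal.toReal_mul]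

lemma PMF.toReal_apply_none_add_sum_some {α : Type*} [Fintype α] (P : PMF (Option α)) :
    (P none).toReal + ∑ a, (P (some a)).toReal = 1 := by
  have h := congrArg ENNReal.toReal P.tsum_coe
  rwa [tsum_fintype, Fintype.sum_option, ENNReal.toReal_add (P.apply_ne_top _)
    (ENNReal.sum_ne_top.2 fun a _ => P.apply_ne_top _), ENNReal.toReal_sum fun a _ => P.apply_ne_top _,
    ENNReal.toReal_one] at h

lemma PMF.apply_eq_zero_of_toReal_eq_zero {α : Type*} (P : PMF α) {a : α} (h : (P a).toReal = 0) :
    P a = 0 :=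
  ((ENNReal.toReal_eq_zero_iff _).mp h).resolve_right (P.apply_ne_top a)

def simplexChart (z : ℝ × ℝ) : Fin 3 → ℝ := ![z.1, z.2, 1 - z.1 - z.2]

lemma continuous_simplexChart : Continuous simplexChart := by
  unfold simplexChart; fun_prop

lemma analyticOnNhd_simplexChart : AnalyticOnNhd ℝ simplexChart univ := by
  refine AnalyticOnNhd.pi fun i => ?_
  fin_cases i
  · exact analyticOnNhd_fst
  · exact analyticOnNhd_snd
  · exact (analyticOnNhd_const.sub analyticOnNhd_fst).sub analyticOnNhd_snd

lemma sum_simplexChart (z : ℝ × ℝ) : ∑ i, simplexChart z i = 1 := by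
  simp [simplexChart, Fin.sum_univ_three]

lemma simplexChart_apply_zero_one {p : Fin 3 → ℝ} (hp : ∑ i, p i = 1) :
    simplexChart (p 0, p 1) = p := by
  rw [Fin.sum_univ_three] at hp
  ext i; fin_cases i <;> simp [simplexChart]; linarith

lemma AnalyticOnNhd.eq_of_eqOn_simplexInterior3 {f g : (Fin 3 → ℝ) → ℝ}
    (hf : AnalyticOnNhd ℝ f univ) (hg : AnalyticOnNhd ℝ g univ) {V : Set (Fin 3 → ℝ)}
    (hV : IsOpen V) (hne : (V ∩ simplexInterior3).Nonempty)
    (hfg : EqOn f g (V ∩ simplexInterior3)) {p : Fin 3 → ℝ} (hp : ∑ i, p i = 1) : f p = g p := by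
  obtain ⟨p₀, hp₀V, hp₀pos, hp₀sum⟩ := hne
  let W : Set (ℝ × ℝ) := simplexChart ⁻¹' (V ∩ ⋂ i, {q | 0 < q i})
  have hW : IsOpen W := (hV.inter (isOpen_iInter_of_finite fun i =>
    isOpen_lt continuous_const (continuous_apply i))).preimage continuous_simplexChart
  have hp₀W : (p₀ 0, p₀ 1) ∈ W := by
    simpa [W, simplexChart_apply_zero_one hp₀sum] using ⟨hp₀V, hp₀pos⟩
  have hfg' : f ∘ simplexChart =ᶠ[𝓝 (p₀ 0, p₀ 1)] g ∘ simplexChart := by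
    filter_upwards [hW.mem_nhds hp₀W] with z hz
    exact hfg ⟨hz.1, by simpa using hz.2, sum_simplexChart z⟩
  have hcomp := (hf.comp analyticOnNhd_simplexChart (mapsTo_univ _ _)).eq_of_eventuallyEq
    (hg.comp analyticOnNhd_simplexChart (mapsTo_univ _ _)) hfg'
  simpa [simplexChart_apply_zero_one hp] using congrFun hcomp (p 0, p 1)

section Simulation

variable {n : ℕ} {α : Type*} [Fintype α]

lemma analyticOnNhd_apply (i : α) : AnalyticOnNhd ℝ (fun p : α → ℝ => p i) univ :=
  (ContinuousLinearMap.proj (R := ℝ) (φ := fun _ : α => ℝ) i).analyticOnNhd _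

lemma analyticOnNhd_sum_prod_mul (c : (Fin n → α) → ℝ) :
    AnalyticOnNhd ℝ (fun p : α → ℝ => ∑ xs, (∏ j, p (xs j)) * c xs) univ :=
  Finset.analyticOnNhd_fun_sum _ fun xs _ =>
    (Finset.analyticOnNhd_fun_prod _ fun j _ => analyticOnNhd_apply (xs j)).mul analyticOnNhd_const

/-- `K xs` is the output law on the sample tuple `xs`, which `n` i.i.d. samples of `p` form with
probability `∏ j, p (xs j)`. -/
def SimulatesOn (K : (Fin n → α) → PMF (Option α)) (S : Set (α → ℝ)) : Prop :=
  ∀ p ∈ S, ∀ x, ∑ xs, (∏ j, p (xs j)) * (K xs (some x)).toReal = p x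

lemma eq_zero_of_sum_prod_mul_eq_zero {q : α → ℝ} {f : (Fin n → α) → ℝ} (hq : ∀ i, 0 ≤ q i)
    (hf : ∀ xs, 0 ≤ f xs) (h : ∑ xs, (∏ j, q (xs j)) * f xs = 0) {xs : Fin n → α}
    (hxs : ∀ j, 0 < q (xs j)) : f xs = 0 := by
  have hterm := (Finset.sum_eq_zero_iff_of_nonneg fun ys _ =>
    mul_nonneg (Finset.prod_nonneg fun j _ => hq (ys j)) (hf ys)).mp h xs (Finset.mem_univ _)
  exact (mul_eq_zero.mp hterm).resolve_left (Finset.prod_pos fun j _ => hxs j).ne'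

lemma SimulatesOn.apply_none_eq_zero {K : (Fin n → α) → PMF (Option α)} {S : Set (α → ℝ)}
    (hK : SimulatesOn K S) {p : α → ℝ} (hpS : p ∈ S) (hp_pos : ∀ i, 0 < p i)
    (hp_sum : ∑ i, p i = 1) (xs : Fin n → α) : K xs none = 0 := by
  have hmass : ∑ ys, (∏ j, p (ys j)) * (K ys none).toReal = 0 :=
    calc ∑ ys, (∏ j, p (ys j)) * (K ys none).toReal
        = ∑ ys : Fin n → α, ∏ j, p (ys j) -
            ∑ x, ∑ ys, (∏ j, p (ys j)) * (K ys (some x)).toReal := by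
          rw [Finset.sum_comm, ← Finset.sum_sub_distrib]
          refine Finset.sum_congr rfl fun ys _ => ?_
          rw [← Finset.mul_sum]
          linear_combination (∏ j, p (ys j)) * (K ys).toReal_apply_none_add_sum_some
      _ = 0 := by
          rw [← Fintype.sum_pow, hp_sum, one_pow, Finset.sum_congr rfl fun x _ => hK p hpS x,
            hp_sum, sub_self]
  exact (K xs).apply_eq_zero_of_toReal_eq_zero <| eq_zero_of_sum_prod_mul_eq_zero
    (fun i => (hp_pos i).le) (fun _ => ENNReal.toReal_nonneg) hmass fun j => hp_pos (xs j)

lemma SimulatesOn.apply_some_eq_zero {K : (Fin n → Fin 3) → PMF (Option (Fin 3))}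
    (hK : SimulatesOn K {p | ∑ i, p i = 1}) {x : Fin 3} {xs : Fin n → Fin 3}
    (hxs : ∀ j, xs j ≠ x) : K xs (some x) = 0 := by
  let q : Fin 3 → ℝ := fun y => if y = x then 0 else 1 / 2
  have hq_sum : ∑ y, q y = 1 := by
    simp [q, Finset.sum_ite, Finset.filter_ne']
  have h := hK q hq_sum x
  rw [show q x = 0 from if_pos rfl] at h
  refine (K xs).apply_eq_zero_of_toReal_eq_zero <| eq_zero_of_sum_prod_mul_eq_zero
    (fun y => ?_) (fun _ => ENNReal.toReal_nonneg) h fun j => ?_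
  · simp only [q]; split_ifs <;> norm_num
  · simp only [q, if_neg (hxs j)]; norm_num

lemma SimulatesOn.of_isOpen {K : (Fin n → Fin 3) → PMF (Option (Fin 3))}
    {V : Set (Fin 3 → ℝ)} (hV : IsOpen V) (hne : (V ∩ simplexInterior3).Nonempty)
    (hK : SimulatesOn K (V ∩ simplexInterior3)) : SimulatesOn K {p | ∑ i, p i = 1} :=
  fun _ hp x => (analyticOnNhd_sum_prod_mul _).eq_of_eqOn_simplexInterior3
    (analyticOnNhd_apply x) hV hne (fun q hq => hK q hq x) hp

end Simulation

section Protocol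

variable {n : ℕ} {U α M β : Type*}

noncomputable def inputChannel (ν : PMF U) (π : Fin n → U → α → M)
    (δ : U → (Fin n → M) → PMF β) (xs : Fin n → α) : PMF β :=
  ν.bind fun u => δ u fun j => π j u (xs j)

lemma exists_avoiding_inputs_of_card_lt [Fintype α] [Fintype M]
    (h : Fintype.card M < Fintype.card α) (f : Fin n → α → M) :
    ∃ a : Fin n → α, ∀ x, ∃ xs : Fin n → α, (∀ j, xs j ≠ x) ∧ ∀ j, f j (xs j) = f j (a j) := by
  classical
  choose a b hab hfab using fun j => Fintype.exists_ne_map_eq_of_card_lt (f j) h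
  refine ⟨a, fun x => ⟨fun j => if a j = x then b j else a j, fun j => ?_, fun j => ?_⟩⟩
  · dsimp only
    split_ifs with hx
    · exact fun hb => hab j (hx.trans hb.symm)
    · exact hx
  · dsimp only
    split_ifs
    · exact (hfab j).symm
    · rfl

lemma exists_inputChannel_none_or_avoided_ne_zero [Fintype α] [Fintype M] (ν : PMF U)
    (π : Fin n → U → α → M) (δ : U → (Fin n → M) → PMF (Option α))
    (h : Fintype.card M < Fintype.card α) :
    (∃ xs, inputChannel ν π δ xs none ≠ 0) ∨
      ∃ x xs, (∀ j, xs j ≠ x) ∧ inputChannel ν π δ xs (some x) ≠ 0 := by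
  obtain ⟨u, hu⟩ := ν.support_nonempty
  obtain ⟨a, ha⟩ := exists_avoiding_inputs_of_card_lt h fun j => π j u
  obtain ⟨o, ho⟩ := (δ u fun j => π j u (a j)).support_nonempty
  have hmem (xs : Fin n → α) (hxs : ∀ j, π j u (xs j) = π j u (a j)) :
      o ∈ (inputChannel ν π δ xs).support :=
    (PMF.mem_support_bind_iff _ _ _).2 ⟨u, hu, by rwa [funext hxs]⟩
  cases o with
  | none => exact Or.inl ⟨a, hmem a fun _ => rfl⟩
  | some x =>
    obtain ⟨xs, hxs, hmsg⟩ := ha x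
    exact Or.inr ⟨x, xs, hxs, hmem xs hmsg⟩

end Protocol

lemma simOutReal3_eq_sum {n : ℕ} {U : Type} (ν : PMF U) (π : Fin n → U → Fin 3 → Fin 2)
    (δ : U → (Fin n → Fin 2) → PMF (Option (Fin 3))) (p : Fin 3 → ℝ) (x : Fin 3) :
    simOutReal3 ν π δ p x =
      ∑ xs, (∏ j, p (xs j)) * (inputChannel ν π δ xs (some x)).toReal := by
  have hsummable (xs : Fin n → Fin 3) :
      Summable fun u => (ν u).toReal * (δ u (fun j => π j u (xs j)) (some x)).toReal := by
    simp only [← ENNReal.toReal_mul]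
    exact ENNReal.summable_toReal (PMF.apply_ne_top (inputChannel ν π δ xs) (some x))
  simp only [simOutReal3, inputChannel, PMF.toReal_bind_apply, Finset.mul_sum, ← tsum_mul_left]
  rw [← Summable.tsum_finsetSum fun xs _ => (hsummable xs).mul_left _]
  exact tsum_congr fun u => Finset.sum_congr rfl fun xs _ => by ring

theorem no_perfect_simulation_three_ary_on_open_set_general (n : ℕ)
    (U : Type) (ν : PMF U)
    (π : Fin n → U → Fin 3 → Fin 2)
    (δ : U → (Fin n → Fin 2) → PMF (Option (Fin 3)))
    (O : Set (Fin 3 → ℝ)) (hO_nonempty : O.Nonempty)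
    (hO_open : ∃ V : Set (Fin 3 → ℝ), IsOpen V ∧ O = V ∩ simplexInterior3) :
    ¬ (∀ p ∈ O, ∀ x : Fin 3, simOutReal3 ν π δ p x = p x) := by
  intro hsim
  obtain ⟨V, hV, rfl⟩ := hO_open
  have hK : SimulatesOn (inputChannel ν π δ) {p | ∑ i, p i = 1} :=
    SimulatesOn.of_isOpen hV hO_nonempty fun p hp x => by
      rw [← simOutReal3_eq_sum]
      exact hsim p hp x
  have huniform : ∑ _ : Fin 3, (1 / 3 : ℝ) = 1 := by norm_num
  rcases exists_inputChannel_none_or_avoided_ne_zero ν π δ (by simp) with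
    ⟨xs, hxs⟩ | ⟨x, xs, havoid, hxs⟩
  · exact hxs (hK.apply_none_eq_zero huniform (fun _ => by norm_num) huniform xs)
  · exact hxs (hK.apply_some_eq_zero havoid)

/-- Perfect 1-bit simulation of 3-ary distributions is impossible, even under the promise
that the input distribution comes from an arbitrary nonempty open subset of the interior
of the probability simplex. -/
theorem no_perfect_simulation_three_ary_on_open_set (n : ℕ) (hn : 1 ≤ n)
    (U : Type) (ν : PMF U)
    (π : Fin n → U → Fin 3 → Fin 2)
    (δ : U → (Fin n → Fin 2) → PMF (Option (Fin 3)))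
    (O : Set (Fin 3 → ℝ)) (hO_nonempty : O.Nonempty) (hO_sub : O ⊆ simplexInterior3)
    (hO_open : ∃ V : Set (Fin 3 → ℝ), IsOpen V ∧ O = V ∩ simplexInterior3) :
    ¬ (∀ p ∈ O, ∀ x : Fin 3, simOutReal3 ν π δ p x = p x) :=
  no_perfect_simulation_three_ary_on_open_set_general n U ν π δ O hO_nonempty hO_open
end

section
/- Let k ≥ 1 and let p : Fin k → ℝ satisfy p_i ≥ 0 for all i and ∑_{i=1}^k p_i = 1. Set s = (∑_{i=1}^k p_i²)^{1/2} (the ℓ₂ norm of p). Then ∏_{i=1}^k (1 − p_i) ≥ (1 − s)·e^{s−1}. -/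
open scoped BigOperators

/-- Key pointwise inequality: for `0 ≤ x ≤ s < 1`,
`x² (log(1-s) + s) ≤ s² (log(1-x) + x)`, proved termwise from the log power series. -/
lemma key_log_ineq {x s : ℝ} (hx0 : 0 ≤ x) (hxs : x ≤ s) (hs1 : s < 1) :
    x ^ 2 * (Real.log (1 - s) + s) ≤ s ^ 2 * (Real.log (1 - x) + x) := by
  have hs0 : 0 ≤ s := hx0.trans hxs
  have hxabs : |x| < 1 := by rw [abs_of_nonneg hx0]; linarith
  have hsabs : |s| < 1 := by rw [abs_of_nonneg hs0]; linarith
  have hX := Real.hasSum_pow_div_log_of_abs_lt_one hxabs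
  have hS := Real.hasSum_pow_div_log_of_abs_lt_one hsabs
  have h := (hS.mul_left (x ^ 2)).sub (hX.mul_left (s ^ 2))
  set f : ℕ → ℝ := fun n => x ^ 2 * (s ^ (n + 1) / (n + 1)) - s ^ 2 * (x ^ (n + 1) / (n + 1))
    with hf
  have hT : ∑' n, f n = x ^ 2 * (-Real.log (1 - s)) - s ^ 2 * (-Real.log (1 - x)) :=
    h.tsum_eq
  have hshift : ∑' n, f n = f 0 + ∑' n, f (n + 1) := Summable.tsum_eq_zero_add h.summable
  have hnn : 0 ≤ ∑' n, f (n + 1) := by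
    apply tsum_nonneg
    intro n
    have hxp : x ^ (n + 2) ≤ x ^ 2 * s ^ n := by
      have h1 := pow_le_pow_left₀ hx0 hxs n
      have h2 : x ^ (n + 2) = x ^ 2 * x ^ n := by ring
      nlinarith [pow_nonneg hx0 2]
    have h1 : s ^ 2 * x ^ (n + 2) ≤ x ^ 2 * s ^ (n + 2) := by
      have h3 : x ^ 2 * s ^ (n + 2) = (x ^ 2 * s ^ n) * s ^ 2 := by ring
      nlinarith [pow_nonneg hs0 2]
    have hfn : f (n + 1) = (x ^ 2 * s ^ (n + 2) - s ^ 2 * x ^ (n + 2)) / ((n : ℝ) + 2) := by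
      simp only [hf]
      push_cast
      ring
    rw [hfn]
    apply div_nonneg _ (by positivity)
    linarith
  have hf0 : f 0 = x ^ 2 * s - s ^ 2 * x := by
    norm_num [hf]
  nlinarith [hT, hshift, hnn, hf0]

/-- For a probability vector `p` on `[k]` with ℓ₂ norm `s = √(∑ p_i²)`,
the success probability `∏ (1 - p_i)` of the base rejection-sampling scheme is at least
`(1 - s)·e^(s - 1)`. -/
theorem prod_one_sub_ge (k : ℕ) (hk : 1 ≤ k) (p : Fin k → ℝ)
    (hp : ∀ i, 0 ≤ p i) (hsum : ∑ i, p i = 1) :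
    (1 - Real.sqrt (∑ i, p i ^ 2)) * Real.exp (Real.sqrt (∑ i, p i ^ 2) - 1)
      ≤ ∏ i, (1 - p i) := by
  set S := ∑ i, p i ^ 2 with hSdef
  have hS0 : 0 ≤ S := Finset.sum_nonneg fun i _ => sq_nonneg _
  set s := Real.sqrt S with hsdef
  have hs0 : 0 ≤ s := Real.sqrt_nonneg _
  have hssq : s ^ 2 = S := Real.sq_sqrt hS0
  have hple1 : ∀ i, p i ≤ 1 := by
    intro i
    calc p i ≤ ∑ j, p j := Finset.single_le_sum (fun j _ => hp j) (Finset.mem_univ i)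
      _ = 1 := hsum
  have hpile : ∀ i, p i ≤ s := by
    intro i
    have : p i ^ 2 ≤ S :=
      Finset.single_le_sum (fun j _ => sq_nonneg (p j)) (Finset.mem_univ i)
    have := Real.sqrt_le_sqrt this
    rwa [Real.sqrt_sq (hp i)] at this
  by_cases hs1 : 1 ≤ s
  · -- degenerate case: RHS ≤ 0 ≤ product
    have hrhs : (1 - s) * Real.exp (s - 1) ≤ 0 :=
      mul_nonpos_of_nonpos_of_nonneg (by linarith) (Real.exp_nonneg _)
    have hprod : 0 ≤ ∏ i, (1 - p i) :=
      Finset.prod_nonneg fun i _ => by linarith [hple1 i]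
    exact hrhs.trans hprod
  push_neg at hs1
  have hSpos : 0 < S := by
    rcases lt_or_eq_of_le hS0 with h | h
    · exact h
    · exfalso
      have hz : ∀ i ∈ Finset.univ, p i ^ 2 = 0 :=
        (Finset.sum_eq_zero_iff_of_nonneg (fun i _ => sq_nonneg (p i))).mp (hSdef ▸ h.symm)
      have hall : ∀ i, p i = 0 := fun i =>
        pow_eq_zero_iff two_ne_zero |>.mp (hz i (Finset.mem_univ i))
      simp [hall] at hsum
  have hspos : 0 < s := Real.sqrt_pos.mpr hSpos
  have hpilt1 : ∀ i, p i < 1 := fun i => lt_of_le_of_lt (hpile i) hs1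
  -- key summed inequality
  have hkey : ∀ i, p i ^ 2 * (Real.log (1 - s) + s)
      ≤ s ^ 2 * (Real.log (1 - p i) + p i) :=
    fun i => key_log_ineq (hp i) (hpile i) hs1
  have hsumkey : S * (Real.log (1 - s) + s)
      ≤ s ^ 2 * (∑ i, Real.log (1 - p i) + 1) := by
    calc S * (Real.log (1 - s) + s) = ∑ i, p i ^ 2 * (Real.log (1 - s) + s) := by
          rw [hSdef, Finset.sum_mul]
      _ ≤ ∑ i, s ^ 2 * (Real.log (1 - p i) + p i) :=
          Finset.sum_le_sum fun i _ => hkey i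
      _ = s ^ 2 * (∑ i, Real.log (1 - p i) + 1) := by
          rw [← Finset.mul_sum, Finset.sum_add_distrib, hsum]
  rw [← hssq] at hsumkey
  have hlogsum : Real.log (1 - s) + s - 1 ≤ ∑ i, Real.log (1 - p i) := by
    have hs2 : 0 < s ^ 2 := by positivity
    nlinarith [hsumkey]
  have hprodeq : ∏ i, (1 - p i) = Real.exp (∑ i, Real.log (1 - p i)) := by
    rw [Real.exp_sum]
    exact Finset.prod_congr rfl fun i _ => (Real.exp_log (by linarith [hpilt1 i])).symm
  have hrhseq : (1 - s) * Real.exp (s - 1) = Real.exp (Real.log (1 - s) + (s - 1)) := by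
    rw [Real.exp_add, Real.exp_log (by linarith)]
  rw [hprodeq, hrhseq]
  apply Real.exp_le_exp.mpr
  linarith
end

section
/- Let k ≥ 1, ε ∈ (0,1], and let p be a distribution on [k] with TV(p, u_k) ≥ ε. Then the number of elements i ∈ [k] with p_i < (1 − ε/2)/k is at least εk/2. -/
/-!
Since `p` and `u_k` have the same mass, `TV(p, u_k) = ∑ᵢ (1/k - pᵢ)⁺`. A light element contributes
at most `1/k` to this sum, any other element at most `ε/(2k)`, so `ε ≤ #light / k + ε / 2`.
-/

open Finset

lemma abs_eq_two_mul_posPart_sub (a : ℝ) : |a| = 2 * a⁺ - a := by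
  linarith [posPart_add_negPart a, posPart_sub_negPart a]

lemma Finset.sum_abs_sub_eq_two_mul_sum_posPart {ι : Type*} (s : Finset ι) {f g : ι → ℝ}
    (h : ∑ i ∈ s, f i = ∑ i ∈ s, g i) :
    ∑ i ∈ s, |f i - g i| = 2 * ∑ i ∈ s, (g i - f i)⁺ := by
  have h' : ∑ i ∈ s, (g i - f i) = 0 := by rw [sum_sub_distrib, h, sub_self]
  simp_rw [abs_sub_comm (f _), abs_eq_two_mul_posPart_sub]
  rw [sum_sub_distrib, h', sub_zero, mul_sum]

lemma Finset.sum_posPart_sub_le {ι : Type*} (s : Finset ι) {p : ι → ℝ}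
    (hp : ∀ i ∈ s, 0 ≤ p i) {c : ℝ} (hc : 0 ≤ c) (t : ℝ) :
    ∑ i ∈ s, (c - p i)⁺ ≤ #{i ∈ s | p i < t} * c + #s * (c - t)⁺ := by
  rw [← sum_filter_add_sum_filter_not s (p · < t)]
  gcongr
  · grw [sum_le_card_nsmul _ _ c, nsmul_eq_mul]
    intro i hi
    exact max_le (by linarith [hp i (mem_filter.1 hi).1]) hc
  · grw [sum_le_card_nsmul _ _ (c - t)⁺, nsmul_eq_mul, card_filter_le]
    intro i hi
    exact posPart_mono (by linarith [not_lt.1 (mem_filter.1 hi).2])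

theorem many_light_elements_general (k : ℕ) (hk : 1 ≤ k) (ε : ℝ) (hε : 0 < ε)
    (p : Fin k → ℝ) (hp : ∀ i, 0 ≤ p i) (hsum : ∑ i, p i = 1)
    (hTV : ε ≤ (1 / 2) * ∑ i, |p i - 1 / k|) :
    ε * k / 2 ≤ ((Finset.univ.filter fun i : Fin k => p i < (1 - ε / 2) / k).card : ℝ) := by
  have hk0 : (0 : ℝ) < k := by exact_mod_cast hk
  have hsum_unif : ∑ i, p i = ∑ _i : Fin k, (1 / k : ℝ) := by
    rw [hsum, sum_const, card_univ, Fintype.card_fin, nsmul_eq_mul]; field_simp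
  have hgap : (1 / k - (1 - ε / 2) / k : ℝ) = ε / (2 * k) := by field_simp; ring
  have hsplit := sum_posPart_sub_le univ (fun i _ => hp i) (c := 1 / k) (by positivity)
    ((1 - ε / 2) / k)
  rw [sum_abs_sub_eq_two_mul_sum_posPart _ hsum_unif] at hTV
  rw [hgap, posPart_eq_self.2 (by positivity), card_univ, Fintype.card_fin, mul_one_div,
    mul_div_left_comm, div_mul_cancel_right₀ hk0.ne'] at hsplit
  have hlight : ε / 2 ≤ #{i | p i < (1 - ε / 2) / k} / k := by linarith
  rwa [le_div_iff₀ hk0, div_mul_eq_mul_div] at hlight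

/-- If `p` is a distribution on `[k]` at total variation distance at least `ε` from uniform,
then at least `εk/2` elements `i` satisfy `p_i < (1 - ε/2)/k`. -/
theorem many_light_elements (k : ℕ) (hk : 1 ≤ k) (ε : ℝ) (hε : 0 < ε) (hε1 : ε ≤ 1)
    (p : Fin k → ℝ) (hp : ∀ i, 0 ≤ p i) (hsum : ∑ i, p i = 1)
    (hTV : ε ≤ (1 / 2) * ∑ i, |p i - 1 / k|) :
    ε * k / 2 ≤ ((Finset.univ.filter fun i : Fin k => p i < (1 - ε / 2) / k).card : ℝ) :=
  many_light_elements_general k hk ε hε p hp hsum hTV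
end

section
/- Let m ≥ 1 and let α, β ∈ [0,1]^m. Set μ = (1/(2m))·∑_{i=1}^m (α_i + β_i). If 0 < μ < 1, then ∑_{i=1}^m (α_i − β_i)² ≤ 4m·μ·(1−μ). -/
open scoped BigOperators

/-- For `α, β ∈ [0,1]^m` with mean `μ = (1/(2m))·∑ (α_i + β_i)` satisfying `0 < μ < 1`,
we have `∑ (α_i − β_i)² ≤ 4m·μ·(1−μ)`. -/
theorem chi_square_contribution_bound (m : ℕ) (hm : 1 ≤ m) (α β : Fin m → ℝ)
    (hα : ∀ i, α i ∈ Set.Icc (0 : ℝ) 1) (hβ : ∀ i, β i ∈ Set.Icc (0 : ℝ) 1)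
    (μ : ℝ) (hμ : μ = (1 / (2 * m)) * ∑ i, (α i + β i))
    (hμ0 : 0 < μ) (hμ1 : μ < 1) :
    ∑ i, (α i - β i) ^ 2 ≤ 4 * m * (μ * (1 - μ)) := by
  have hm0 : (0 : ℝ) < m := by exact_mod_cast hm
  set S : ℝ := ∑ i, (α i + β i) with hS
  have h1 : ∑ i, (α i - β i) ^ 2 ≤ ∑ i, (2 * (α i + β i) - (α i + β i) ^ 2) := by
    apply Finset.sum_le_sum
    intro i _
    have ha := hα i
    have hb := hβ i
    simp only [Set.mem_Icc] at ha hb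
    nlinarith [ha.1, ha.2, hb.1, hb.2]
  have hCS : S ^ 2 ≤ (m : ℝ) * ∑ i, (α i + β i) ^ 2 := by
    have := sq_sum_le_card_mul_sum_sq (s := Finset.univ)
      (f := fun i => α i + β i)
    simpa using this
  have h2 : ∑ i, (2 * (α i + β i) - (α i + β i) ^ 2)
      = 2 * S - ∑ i, (α i + β i) ^ 2 := by
    rw [Finset.sum_sub_distrib, ← Finset.mul_sum]
  have hμS : μ = S / (2 * m) := by rw [hμ]; ring
  have hSval : S = 2 * m * μ := by
    rw [hμS]; field_simp
  calc ∑ i, (α i - β i) ^ 2 ≤ 2 * S - ∑ i, (α i + β i) ^ 2 := by rw [← h2]; exact h1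
    _ ≤ 2 * S - S ^ 2 / m := by
        have : S ^ 2 / m ≤ ∑ i, (α i + β i) ^ 2 := by
          rw [div_le_iff₀ hm0]; linarith [hCS]
        linarith
    _ = 4 * m * (μ * (1 - μ)) := by
        rw [hSval]; field_simp; ring
end

section
/- There exists an absolute constant c > 0 (independent of k, L, δ) such that the following holds. Let k, L be integers with 2 ≤ L < k and L dividing k, and let δ : Fin k → ℝ be a nonzero vector with ∑_{i=1}^k δ_i = 0. Let f be a uniformly random balanced L-coloring of [k] and set Z_r = ∑_{i : f(i)=r} δ_i for r ∈ [L]. Then P( ‖Z‖₂ > ‖δ‖₂/2 ) ≥ c. -/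
open scoped BigOperators Classical

/-- The finite set of balanced `L`-colorings of `[k]`: functions `Fin k → Fin L` each of
whose fibers has exactly `k / L` elements. -/
noncomputable def balancedColorings (k L : ℕ) : Finset (Fin k → Fin L) :=
  Finset.univ.filter fun f =>
    ∀ r : Fin L, (Finset.univ.filter fun i => f i = r).card = k / L

/-- For a coloring `f` and weights `δ`, `partSum δ f r = ∑_{i : f i = r} δ_i`. -/
noncomputable def partSum {k L : ℕ} (δ : Fin k → ℝ) (f : Fin k → Fin L) (r : Fin L) : ℝ :=
  ∑ i ∈ Finset.univ.filter (fun i => f i = r), δ i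

/-! Write `W f = ‖Z‖² = ‖δ‖² + Y f` with `Y f = ∑_{i ≠ j, f i = f j} δ i δ j`. A uniformly random
balanced coloring is exchangeable: the number of colorings with a prescribed coincidence pattern on
two, three or four distinct points depends only on the pattern. Together with `∑ δ = 0` this gives
`E Y = -P(f i = f j) ‖δ‖²` with `P(f i = f j) ≤ 1/2`, and an exact formula for `E Y²` showing
`E Y² ≤ 12 ‖δ‖⁴`. Hence `E W ≥ ‖δ‖² / 2` and `E W² ≤ 13 ‖δ‖⁴`, and the Paley–Zygmund inequality
gives `P(W > ‖δ‖² / 4) ≥ 1 / 208`. -/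

open Finset

/-- The Paley–Zygmund inequality, in counting form. -/
theorem sq_sub_mul_card_le_card_filter_mul {α : Type*} (s : Finset α) (W : α → ℝ) {θ : ℝ}
    (hθ : 0 ≤ θ) (hmean : θ * #s ≤ ∑ x ∈ s, W x) :
    (∑ x ∈ s, W x - θ * #s) ^ 2 ≤ #{x ∈ s | θ < W x} * ∑ x ∈ s, W x ^ 2 := by
  have hlow : ∑ x ∈ s with ¬θ < W x, W x ≤ θ * #s :=
    calc ∑ x ∈ s with ¬θ < W x, W x ≤ ∑ x ∈ s with ¬θ < W x, θ :=
          sum_le_sum fun x hx => not_lt.1 (mem_filter.1 hx).2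
      _ ≤ θ * #s := by
          rw [sum_const, nsmul_eq_mul, mul_comm]
          exact mul_le_mul_of_nonneg_left (by exact_mod_cast card_filter_le _ _) hθ
  have hsplit := sum_filter_add_sum_filter_not s (fun x => θ < W x) W
  calc (∑ x ∈ s, W x - θ * #s) ^ 2 ≤ (∑ x ∈ s with θ < W x, W x) ^ 2 :=
        pow_le_pow_left₀ (by linarith) (by linarith) 2
    _ ≤ (#{x ∈ s | θ < W x} : ℝ) * ∑ x ∈ s with θ < W x, W x ^ 2 :=
        sq_sum_le_card_mul_sum_sq (s := s.filter fun x => θ < W x) (f := W)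
    _ ≤ #{x ∈ s | θ < W x} * ∑ x ∈ s, W x ^ 2 := by
        gcongr ?_ * ?_
        exact sum_le_sum_of_subset_of_nonneg (filter_subset _ s) fun x _ _ => sq_nonneg (W x)

theorem sum_ite_zero_eq_card_filter_mul {α : Type*} (s : Finset α) (P : α → Prop)
    [DecidablePred P] (c : ℝ) : ∑ x ∈ s, (if P x then c else 0) = #{x ∈ s | P x} * c := by
  rw [← sum_filter, sum_const, nsmul_eq_mul]

section OffDiagProd

variable {ι : Type*} [DecidableEq ι] (δ : ι → ℝ)

def offDiagProd (i j : ι) : ℝ := if i = j then 0 else δ i * δ j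

theorem offDiagProd_comm (i j : ι) : offDiagProd δ i j = offDiagProd δ j i := by
  simp only [offDiagProd, eq_comm, mul_comm]

theorem offDiagProd_eq_sub (i j : ι) :
    offDiagProd δ i j = δ i * δ j - if i = j then δ i * δ j else 0 := by
  unfold offDiagProd; split_ifs <;> ring

variable [Fintype ι] {δ}

theorem sum_offDiagProd_right (hδ : ∑ i, δ i = 0) (i : ι) :
    ∑ j, offDiagProd δ i j = -δ i ^ 2 := by
  simp only [offDiagProd_eq_sub, sum_sub_distrib, ← mul_sum, hδ, sum_ite_eq, mem_univ, if_true]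
  ring

theorem sum_offDiagProd (hδ : ∑ i, δ i = 0) : ∑ i, ∑ j, offDiagProd δ i j = -∑ i, δ i ^ 2 := by
  simp [sum_offDiagProd_right hδ]

theorem sum_offDiagProd_sq :
    ∑ i, ∑ j, offDiagProd δ i j ^ 2 = (∑ i, δ i ^ 2) ^ 2 - ∑ i, δ i ^ 4 := by
  have h (i j : ι) : offDiagProd δ i j ^ 2 = δ i ^ 2 * δ j ^ 2 - if i = j then δ i ^ 4 else 0 := by
    rcases eq_or_ne i j with rfl | hij <;> simp [offDiagProd, *] <;> ring
  simp only [h, sum_sub_distrib, ← mul_sum, sum_ite_eq, mem_univ, if_true, ← sum_mul, sq]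

theorem sum_offDiagProd_mul_add_sq (hδ : ∑ i, δ i = 0) :
    ∑ i, ∑ j, offDiagProd δ i j * (δ i ^ 2 + δ j ^ 2) = -(2 * ∑ i, δ i ^ 4) := by
  have hsymm : ∑ i, ∑ j, offDiagProd δ i j * δ j ^ 2 = ∑ i, ∑ j, offDiagProd δ i j * δ i ^ 2 := by
    rw [sum_comm]
    exact sum_congr rfl fun i _ => sum_congr rfl fun j _ => by rw [offDiagProd_comm]
  simp only [mul_add, sum_add_distrib, hsymm, ← sum_mul, sum_offDiagProd_right hδ]
  simp only [neg_mul, ← pow_add, Nat.reduceAdd, sum_neg_distrib]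
  ring

/-- For `i ≠ j` and `p ≠ q`, `coincidenceWeight t₄ (t₃ - t₄) (t₂ - 2 t₃ + t₄) i j p q` equals
`t₂`, `t₃` or `t₄` according as `{i, j}` and `{p, q}` share two, one or no points. -/
def coincidenceWeight (a b c : ℝ) (i j p q : ι) : ℝ :=
  a + b * ((if i = p then 1 else 0) + (if i = q then 1 else 0)
      + (if j = p then 1 else 0) + (if j = q then 1 else 0))
    + c * ((if i = p then 1 else 0) * (if j = q then 1 else 0)
      + (if i = q then 1 else 0) * (if j = p then 1 else 0))

theorem sum_sum_coincidenceWeight_mul_offDiagProd (hδ : ∑ i, δ i = 0) (a b c : ℝ) (i j : ι) :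
    ∑ p, ∑ q, coincidenceWeight a b c i j p q * offDiagProd δ p q
      = -(a * ∑ i, δ i ^ 2) - 2 * b * (δ i ^ 2 + δ j ^ 2) + 2 * c * offDiagProd δ i j := by
  have hcol (x : ι) : ∑ p, offDiagProd δ p x = -δ x ^ 2 := by
    simp only [offDiagProd_comm δ _ x, sum_offDiagProd_right hδ]
  simp only [coincidenceWeight, add_mul, mul_add, ite_mul, one_mul, zero_mul, mul_assoc,
    sum_add_distrib, ← mul_sum, sum_ite_irrel, sum_const_zero, sum_ite_eq, mem_univ, if_true,
    sum_offDiagProd_right hδ, sum_neg_distrib, hcol, offDiagProd_comm δ j i]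
  ring

end OffDiagProd

section Coincidences

variable {ι κ : Type*}

theorem card_filter_comp_eq_of_injective {S : Finset (ι → κ)}
    (hS : ∀ σ : Equiv.Perm ι, ∀ f ∈ S, f ∘ σ ∈ S) {n : ℕ} {a b : Fin n → ι}
    (ha : Function.Injective a) (hb : Function.Injective b) (P : (Fin n → κ) → Prop)
    [DecidablePred P] : #{f ∈ S | P (f ∘ a)} = #{f ∈ S | P (f ∘ b)} := by
  obtain ⟨σ, hσ⟩ := Equiv.Perm.exists_extending_pair a b ha hb
  have hσ' : ⇑σ ∘ a = b := funext hσ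
  refine card_nbij' (· ∘ σ.symm) (· ∘ σ) ?_ ?_ ?_ ?_
  · intro f hf
    simp only [coe_filter] at hf ⊢
    refine ⟨hS _ f hf.1, ?_⟩
    rw [← hσ', ← Function.comp_assoc, Function.comp_assoc f, Equiv.symm_comp_self]
    exact hf.2
  · intro f hf
    simp only [coe_filter] at hf ⊢
    refine ⟨hS _ f hf.1, ?_⟩
    rw [Function.comp_assoc, hσ']
    exact hf.2
  · intro f _; simp [Function.comp_assoc]
  · intro f _; simp [Function.comp_assoc]

variable [DecidableEq κ]

structure HasCoincidenceCounts (S : Finset (ι → κ)) (t₂ t₃ t₄ : ℕ) : Prop where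
  pair : ∀ i j, i ≠ j → #{f ∈ S | f i = f j} = t₂
  triple : ∀ i j p, i ≠ j → i ≠ p → j ≠ p → #{f ∈ S | f i = f j ∧ f i = f p} = t₃
  quadruple : ∀ i j p q, i ≠ j → i ≠ p → i ≠ q → j ≠ p → j ≠ q → p ≠ q →
    #{f ∈ S | f i = f j ∧ f p = f q} = t₄

theorem card_filter_eq_eq_of_perm_invariant {S : Finset (ι → κ)}
    (hS : ∀ σ : Equiv.Perm ι, ∀ f ∈ S, f ∘ σ ∈ S) {i j a b : ι} (hij : i ≠ j) (hab : a ≠ b) :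
    #{f ∈ S | f i = f j} = #{f ∈ S | f a = f b} := by
  refine card_filter_comp_eq_of_injective hS (a := ![i, j]) (b := ![a, b]) ?_ ?_
    (fun g => g 0 = g 1)
  all_goals
    simp only [Matrix.vecCons, Fin.cons_injective_iff]
    simp [*, Function.Injective, eq_iff_true_of_subsingleton]

theorem hasCoincidenceCounts_of_perm_invariant {S : Finset (ι → κ)}
    (hS : ∀ σ : Equiv.Perm ι, ∀ f ∈ S, f ∘ σ ∈ S) {a b c d : ι}
    (hab : a ≠ b) (hac : a ≠ c) (had : a ≠ d) (hbc : b ≠ c) (hbd : b ≠ d) (hcd : c ≠ d) :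
    HasCoincidenceCounts S #{f ∈ S | f a = f b} #{f ∈ S | f a = f b ∧ f a = f c}
      #{f ∈ S | f a = f b ∧ f c = f d} := by
  refine ⟨fun i j hij => card_filter_eq_eq_of_perm_invariant hS hij hab,
    fun i j p hij hip hjp => card_filter_comp_eq_of_injective hS (a := ![i, j, p])
      (b := ![a, b, c]) ?_ ?_ (fun g => g 0 = g 1 ∧ g 0 = g 2),
    fun i j p q hij hip hiq hjp hjq hpq => card_filter_comp_eq_of_injective hS
      (a := ![i, j, p, q]) (b := ![a, b, c, d]) ?_ ?_ (fun g => g 0 = g 1 ∧ g 2 = g 3)⟩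
  all_goals
    simp only [Matrix.vecCons, Fin.cons_injective_iff]
    simp [*, Function.Injective, eq_iff_true_of_subsingleton]

variable [DecidableEq ι] {S : Finset (ι → κ)} {t₂ t₃ t₄ : ℕ}

theorem HasCoincidenceCounts.card_filter_and (h : HasCoincidenceCounts S t₂ t₃ t₄) {i j p q : ι}
    (hij : i ≠ j) (hpq : p ≠ q) :
    (#{f ∈ S | f i = f j ∧ f p = f q} : ℝ) =
      coincidenceWeight t₄ (t₃ - t₄) (t₂ - 2 * t₃ + t₄) i j p q := by
  have card_congr {P Q : (ι → κ) → Prop} [DecidablePred P] [DecidablePred Q]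
      (hPQ : ∀ f, P f ↔ Q f) : #{f ∈ S | P f} = #{f ∈ S | Q f} :=
    congrArg card (filter_congr fun f _ => hPQ f)
  rcases eq_or_ne i p with rfl | hip
  · rcases eq_or_ne j q with rfl | hjq
    · rw [card_congr (Q := fun f => f i = f j) (by grind), h.pair i j hij]
      simp [coincidenceWeight, hij, hij.symm]; ring
    · rw [h.triple i j q hij hpq hjq]
      simp [coincidenceWeight, hij.symm, hpq, hjq]
  rcases eq_or_ne i q with rfl | hiq
  · rcases eq_or_ne j p with rfl | hjp
    · rw [card_congr (Q := fun f => f i = f j) (by grind), h.pair i j hij]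
      simp [coincidenceWeight, hij, hij.symm]; ring
    · rw [card_congr (Q := fun f => f i = f j ∧ f i = f p) (by grind), h.triple i j p hij hip hjp]
      simp [coincidenceWeight, hij.symm, hip, hjp]
  rcases eq_or_ne j p with rfl | hjp
  · rw [card_congr (Q := fun f => f j = f i ∧ f j = f q) (by grind),
      h.triple j i q hij.symm hpq hiq]
    simp [coincidenceWeight, hij, hiq, hpq]
  rcases eq_or_ne j q with rfl | hjq
  · rw [card_congr (Q := fun f => f j = f i ∧ f j = f p) (by grind),
      h.triple j i p hij.symm hpq.symm hip]
    simp [coincidenceWeight, hij, hip, hjp]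
  rw [h.quadruple i j p q hij hip hiq hjp hjq hpq]
  simp [coincidenceWeight, hip, hiq, hjp, hjq]

theorem HasCoincidenceCounts.card_filter_and_mul_offDiagProd_mul
    (h : HasCoincidenceCounts S t₂ t₃ t₄) (δ : ι → ℝ) (i j p q : ι) :
    #{f ∈ S | f i = f j ∧ f p = f q} * (offDiagProd δ i j * offDiagProd δ p q) =
      coincidenceWeight t₄ (t₃ - t₄) (t₂ - 2 * t₃ + t₄) i j p q
        * (offDiagProd δ i j * offDiagProd δ p q) := by
  rcases eq_or_ne i j with rfl | hij
  · simp [offDiagProd]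
  rcases eq_or_ne p q with rfl | hpq
  · simp [offDiagProd]
  rw [h.card_filter_and hij hpq]

variable [Fintype ι] {δ : ι → ℝ}

def coincidenceSum (δ : ι → ℝ) (f : ι → κ) : ℝ :=
  ∑ i, ∑ j, if f i = f j then offDiagProd δ i j else 0

theorem sum_sq_sum_fiber [Fintype κ] (δ : ι → ℝ) (f : ι → κ) :
    ∑ r, (∑ i ∈ univ.filter (fun i => f i = r), δ i) ^ 2 = ∑ i, δ i ^ 2 + coincidenceSum δ f := by
  have h (i j : ι) : (if f i = f j then δ i * δ j else 0)
      = (if i = j then δ i * δ j else 0) + if f i = f j then offDiagProd δ i j else 0 := by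
    rcases eq_or_ne i j with rfl | hij <;> simp [offDiagProd, *]
  calc ∑ r, (∑ i ∈ univ.filter (fun i => f i = r), δ i) ^ 2
      = ∑ r, ∑ i ∈ univ.filter (fun i => f i = r), ∑ j, if f i = f j then δ i * δ j else 0 := by
        refine sum_congr rfl fun r _ => ?_
        rw [sq, sum_mul]
        refine sum_congr rfl fun i hi => ?_
        rw [mul_sum, ← sum_filter]
        exact sum_congr (by ext j; simp [(mem_filter.1 hi).2, eq_comm]) fun _ _ => rfl
    _ = ∑ i, δ i ^ 2 + coincidenceSum δ f := by
        rw [sum_fiberwise]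
        simp only [h, sum_add_distrib, sum_ite_eq, mem_univ, if_true, coincidenceSum, sq]

theorem HasCoincidenceCounts.sum_coincidenceSum (h : HasCoincidenceCounts S t₂ t₃ t₄)
    (hδ : ∑ i, δ i = 0) : ∑ f ∈ S, coincidenceSum δ f = -(t₂ * ∑ i, δ i ^ 2) := by
  have hpair (i j : ι) : #{f ∈ S | f i = f j} * offDiagProd δ i j = t₂ * offDiagProd δ i j := by
    rcases eq_or_ne i j with rfl | hij
    · simp [offDiagProd]
    · rw [h.pair i j hij]
  unfold coincidenceSum
  rw [sum_comm, sum_congr rfl fun i _ => sum_comm]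
  simp only [sum_ite_zero_eq_card_filter_mul, hpair, ← mul_sum, sum_offDiagProd hδ, mul_neg]

theorem HasCoincidenceCounts.sum_coincidenceSum_sq (h : HasCoincidenceCounts S t₂ t₃ t₄)
    (hδ : ∑ i, δ i = 0) :
    ∑ f ∈ S, coincidenceSum δ f ^ 2 =
      2 * t₂ * ((∑ i, δ i ^ 2) ^ 2 - ∑ i, δ i ^ 4)
        + t₃ * (8 * ∑ i, δ i ^ 4 - 4 * (∑ i, δ i ^ 2) ^ 2)
        + t₄ * (3 * (∑ i, δ i ^ 2) ^ 2 - 6 * ∑ i, δ i ^ 4) := by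
  have expand (f : ι → κ) : coincidenceSum δ f ^ 2 = ∑ i, ∑ j, ∑ p, ∑ q,
      if f i = f j ∧ f p = f q then offDiagProd δ i j * offDiagProd δ p q else 0 := by
    simp only [coincidenceSum, sq, sum_mul]
    simp only [mul_sum, ite_zero_mul_ite_zero]
  calc ∑ f ∈ S, coincidenceSum δ f ^ 2
      = ∑ i, ∑ j, ∑ p, ∑ q, #{f ∈ S | f i = f j ∧ f p = f q} *
          (offDiagProd δ i j * offDiagProd δ p q) := by
        simp only [expand, ← sum_ite_zero_eq_card_filter_mul]
        rw [sum_comm, sum_congr rfl fun i _ => (sum_comm.trans (sum_congr rfl fun j _ =>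
          (sum_comm.trans (sum_congr rfl fun p _ => sum_comm))))]
    _ = ∑ i, ∑ j, (-(t₄ * ∑ i, δ i ^ 2) * offDiagProd δ i j
          - 2 * (t₃ - t₄) * (offDiagProd δ i j * (δ i ^ 2 + δ j ^ 2))
          + 2 * (t₂ - 2 * t₃ + t₄) * offDiagProd δ i j ^ 2) := by
        simp only [h.card_filter_and_mul_offDiagProd_mul, mul_left_comm _ (offDiagProd δ _ _),
          ← mul_sum, sum_sum_coincidenceWeight_mul_offDiagProd hδ]
        exact sum_congr rfl fun i _ => sum_congr rfl fun j _ => by ring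
    _ = _ := by
        simp only [sum_add_distrib, sum_sub_distrib, ← mul_sum, sum_offDiagProd hδ,
          sum_offDiagProd_mul_add_sq hδ, sum_offDiagProd_sq]
        ring

theorem HasCoincidenceCounts.sum_coincidenceSum_sq_le (h : HasCoincidenceCounts S t₂ t₃ t₄)
    (hδ : ∑ i, δ i = 0) (ht₂ : 2 * t₂ ≤ #S) (ht₃ : t₃ ≤ #S) (ht₄ : t₄ ≤ #S) :
    ∑ f ∈ S, coincidenceSum δ f ^ 2 ≤ 12 * #S * (∑ i, δ i ^ 2) ^ 2 := by
  have hs4 : 0 ≤ ∑ i, δ i ^ 4 := by positivity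
  have hs4' : ∑ i, δ i ^ 4 ≤ (∑ i, δ i ^ 2) ^ 2 := by
    simpa [← pow_mul] using sum_sq_le_sq_sum_of_nonneg (s := univ) (f := fun i => δ i ^ 2)
      fun i _ => sq_nonneg (δ i)
  have ht₂' : 2 * (t₂ : ℝ) ≤ #S := by exact_mod_cast ht₂
  have ht₃' : (t₃ : ℝ) ≤ #S := by exact_mod_cast ht₃
  have ht₄' : (t₄ : ℝ) ≤ #S := by exact_mod_cast ht₄
  rw [h.sum_coincidenceSum_sq hδ]
  nlinarith [mul_nonneg (Nat.cast_nonneg t₂ : (0 : ℝ) ≤ t₂) hs4,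
    mul_nonneg (Nat.cast_nonneg t₃ : (0 : ℝ) ≤ t₃) (sq_nonneg (∑ i, δ i ^ 2)),
    mul_nonneg (Nat.cast_nonneg t₄ : (0 : ℝ) ≤ t₄) hs4,
    mul_nonneg (sub_nonneg.2 ht₂') (sq_nonneg (∑ i, δ i ^ 2)),
    mul_nonneg (sub_nonneg.2 ht₃') hs4, mul_nonneg (sub_nonneg.2 ht₄') (sq_nonneg (∑ i, δ i ^ 2)),
    mul_nonneg (Nat.cast_nonneg (α := ℝ) #S) (sub_nonneg.2 hs4')]

theorem HasCoincidenceCounts.card_le_mul_card_filter (h : HasCoincidenceCounts S t₂ t₃ t₄)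
    (hδ : ∑ i, δ i = 0) (hδ0 : δ ≠ 0) (ht₂ : 2 * t₂ ≤ #S) (ht₃ : t₃ ≤ #S) (ht₄ : t₄ ≤ #S) :
    (#S : ℝ) ≤ 208 * #{f ∈ S | (∑ i, δ i ^ 2) / 4 < ∑ i, δ i ^ 2 + coincidenceSum δ f} := by
  have ht₂' : 2 * (t₂ : ℝ) ≤ #S := by exact_mod_cast ht₂
  set s₂ := ∑ i, δ i ^ 2
  set N : ℝ := (#S : ℝ)
  have hs₂ : 0 < s₂ := by
    obtain ⟨i, hi⟩ := Function.ne_iff.1 hδ0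
    exact sum_pos' (fun j _ => sq_nonneg (δ j))
      ⟨i, mem_univ i, lt_of_le_of_ne (sq_nonneg _) (pow_ne_zero 2 hi).symm⟩
  have hmean : ∑ f ∈ S, (s₂ + coincidenceSum δ f) = N * s₂ - t₂ * s₂ := by
    rw [sum_add_distrib, h.sum_coincidenceSum hδ, sum_const, nsmul_eq_mul]; ring
  have hsecond : ∑ f ∈ S, (s₂ + coincidenceSum δ f) ^ 2 ≤ 13 * N * s₂ ^ 2 := by
    have := h.sum_coincidenceSum_sq_le hδ ht₂ ht₃ ht₄
    simp only [add_sq, sum_add_distrib, sum_const, nsmul_eq_mul, ← mul_sum,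
      h.sum_coincidenceSum hδ]
    nlinarith [mul_nonneg (Nat.cast_nonneg t₂ : (0 : ℝ) ≤ t₂) (sq_nonneg s₂)]
  have hpz := sq_sub_mul_card_le_card_filter_mul S (fun f => s₂ + coincidenceSum δ f)
    (θ := s₂ / 4) (by positivity) (by rw [hmean]; nlinarith)
  rw [hmean] at hpz
  set G : ℝ := (#{f ∈ S | s₂ / 4 < s₂ + coincidenceSum δ f} : ℝ)
  have hG : 0 ≤ G := Nat.cast_nonneg _
  have hlow : (N * s₂ / 4) ^ 2 ≤ G * (13 * N * s₂ ^ 2) :=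
    calc (N * s₂ / 4) ^ 2 ≤ (N * s₂ - t₂ * s₂ - s₂ / 4 * N) ^ 2 :=
          pow_le_pow_left₀ (by positivity) (by nlinarith) 2
      _ ≤ G * (13 * N * s₂ ^ 2) := hpz.trans (mul_le_mul_of_nonneg_left hsecond hG)
  have hN : N ^ 2 ≤ 208 * G * N := by
    have h16 : 0 < s₂ ^ 2 / 16 := by positivity
    nlinarith
  nlinarith [(Nat.cast_nonneg _ : (0 : ℝ) ≤ N)]

end Coincidences

section BalancedColorings

variable {k L m : ℕ}

theorem comp_perm_mem_balancedColorings (σ : Equiv.Perm (Fin k)) {f : Fin k → Fin L}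
    (hf : f ∈ balancedColorings k L) : f ∘ σ ∈ balancedColorings k L := by
  simp only [balancedColorings, mem_filter, mem_univ, true_and] at hf ⊢
  intro r
  rw [← hf r]
  exact card_equiv σ (by simp)

theorem card_fiber_of_mem_balancedColorings (hL : 0 < L) {f : Fin (L * m) → Fin L}
    (hf : f ∈ balancedColorings (L * m) L) (r : Fin L) : #{i | f i = r} = m := by
  simp only [balancedColorings, mem_filter, mem_univ, true_and] at hf
  rw [hf r, Nat.mul_div_cancel_left _ hL]

theorem balancedColorings_nonempty (hL : 0 < L) : (balancedColorings (L * m) L).Nonempty := by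
  refine ⟨fun i => (finProdFinEquiv.symm i).1, ?_⟩
  simp only [balancedColorings, mem_filter, mem_univ, true_and, Nat.mul_div_cancel_left _ hL]
  intro r
  rw [card_equiv finProdFinEquiv.symm (t := {r} ×ˢ univ) (by simp [eq_comm])]
  simp

theorem two_mul_card_filter_eq_le_card_balancedColorings (hL : 2 ≤ L) {a b : Fin (L * m)}
    (hab : a ≠ b) :
    2 * #{f ∈ balancedColorings (L * m) L | f a = f b} ≤ #(balancedColorings (L * m) L) := by
  set B := balancedColorings (L * m) L
  have hL0 : 0 < L := by omega
  have hfiber : ∑ j, #{f ∈ B | f j = f a} = #B * m := by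
    simp only [card_filter]
    rw [sum_comm]
    rw [sum_congr rfl fun f hf => (card_filter _ _).symm.trans
      (card_fiber_of_mem_balancedColorings hL0 hf (f a)), sum_const, smul_eq_mul]
  have hpair : ∀ j ∈ univ.erase a, #{f ∈ B | f j = f a} = #{f ∈ B | f a = f b} := fun j hj =>
    card_filter_eq_eq_of_perm_invariant (fun σ _ => comp_perm_mem_balancedColorings σ)
      (ne_of_mem_erase hj) hab
  rw [← add_sum_erase _ _ (mem_univ a), sum_congr rfl hpair, sum_const,
    card_erase_of_mem (mem_univ a), card_univ, Fintype.card_fin, smul_eq_mul,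
    filter_true_of_mem fun _ _ => rfl] at hfiber
  have hm : 2 * m ≤ L * m := Nat.mul_le_mul_right m hL
  have hLm : 2 ≤ L * m := by
    have := a.isLt; have := b.isLt; omega
  zify [show 1 ≤ L * m by omega] at hfiber hm ⊢
  nlinarith

end BalancedColorings

/-- There is an absolute constant `c > 0` such that for all `2 ≤ L < k` with `L ∣ k` and
every nonzero `δ : Fin k → ℝ` summing to `0`, a uniformly random balanced `L`-coloring `f`
satisfies `‖Z‖₂ > ‖δ‖₂ / 2` with probability at least `c`, where `Z_r = ∑_{i : f i = r} δ_i`. -/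
theorem random_flattening_anticoncentration :
    ∃ c : ℝ, 0 < c ∧
      ∀ (k L : ℕ), 2 ≤ L → L < k → L ∣ k →
        ∀ δ : Fin k → ℝ, δ ≠ 0 → (∑ i, δ i = 0) →
          c ≤ (((balancedColorings k L).filter fun f =>
                Real.sqrt (∑ r, partSum δ f r ^ 2) > Real.sqrt (∑ i, δ i ^ 2) / 2).card : ℝ)
              / ((balancedColorings k L).card : ℝ) := by
  refine ⟨1 / 208, by norm_num, fun k L hL hLk hdvd δ hδ0 hδ => ?_⟩
  obtain ⟨m, rfl⟩ := hdvd
  have hm : 1 < m := (Nat.lt_mul_iff_one_lt_right (by omega)).1 hLk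
  obtain ⟨a, b, c, d, hab, hac, had, hbc, hbd, hcd⟩ :
      ∃ a b c d : Fin (L * m), a ≠ b ∧ a ≠ c ∧ a ≠ d ∧ b ≠ c ∧ b ≠ d ∧ c ≠ d := by
    have : 4 ≤ L * m := by nlinarith
    exact ⟨⟨0, by omega⟩, ⟨1, by omega⟩, ⟨2, by omega⟩, ⟨3, by omega⟩, by simp [Fin.ext_iff]⟩
  have key := (hasCoincidenceCounts_of_perm_invariant
    (fun σ _ => comp_perm_mem_balancedColorings σ) hab hac had hbc hbd hcd).card_le_mul_card_filter
    hδ hδ0 (two_mul_card_filter_eq_le_card_balancedColorings hL hab) (card_filter_le _ _)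
    (card_filter_le _ _)
  have hsqrt (f : Fin (L * m) → Fin L) :
      Real.sqrt (∑ r, partSum δ f r ^ 2) > Real.sqrt (∑ i, δ i ^ 2) / 2 ↔
        (∑ i, δ i ^ 2) / 4 < ∑ i, δ i ^ 2 + coincidenceSum δ f := by
    rw [gt_iff_lt, Real.lt_sqrt (by positivity), div_pow, Real.sq_sqrt (by positivity)]
    simp only [partSum, sum_sq_sum_fiber]
    norm_num
  simp_rw [hsqrt]
  rw [le_div_iff₀ (by exact_mod_cast (balancedColorings_nonempty (by omega)).card_pos)]
  linarith
end

section
/- Let n ≥ 1, let 𝒵 be a finite nonempty set with a probability distribution μ on 𝒵, and for each i ∈ [n] let X_i be a finite nonempty set, P_i a probability distribution on X_i with P_i(x) > 0 for all x ∈ X_i, and for each z ∈ 𝒵 let Q_{i,z} be a probability distribution on X_i. Define the mixture M = ∑_{z∈𝒵} μ(z)·(Q_{1,z}⊗…⊗Q_{n,z}) on X₁×…×X_n, and for z, z' ∈ 𝒵 and i ∈ [n] define H_i(z,z') = ∑_{x∈X_i} (Q_{i,z}(x) − P_i(x))·(Q_{i,z'}(x) − P_i(x)) / P_i(x). Then χ²(M,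 P₁⊗…⊗P_n) = ∑_{z,z'∈𝒵} μ(z)μ(z')·∏_{i=1}^n (1 + H_i(z,z')) − 1 (i.e., it equals E_{Z,Z'}[∏_{i=1}^n (1 + H_i(Z,Z'))] − 1 where Z, Z' are independent with distribution μ). -/
open scoped BigOperators

private lemma sum_pi_prod {n : ℕ} (X : Fin n → Type) [∀ i, Fintype (X i)]
    (f : ∀ i, X i → ℝ) :
    ∑ x : (∀ i, X i), ∏ i, f i (x i) = ∏ i, ∑ y, f i y := by
  rw [Finset.prod_univ_sum, Fintype.piFinset_univ]

/-- Chi-square divergence of a mixture of product distributions from a fixed product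
distribution: with `M = E_Z[⊗_i Q_{i,Z}]` and
`H_i(z,z') = ∑_x (Q_{i,z}(x) − P_i(x))(Q_{i,z'}(x) − P_i(x))/P_i(x)`,
`χ²(M, ⊗P_i) = E_{Z,Z'}[∏_i (1 + H_i(Z,Z'))] − 1` for independent `Z, Z' ~ μ`. -/
theorem chiSq_mixture_product (n : ℕ) (hn : 1 ≤ n)
    (Z : Type) [Fintype Z] [Nonempty Z]
    (μ : Z → ℝ) (hμnonneg : ∀ z, 0 ≤ μ z) (hμsum : ∑ z, μ z = 1)
    (X : Fin n → Type) [∀ i, Fintype (X i)] [∀ i, Nonempty (X i)]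
    (P : ∀ i, X i → ℝ) (Q : ∀ i, Z → X i → ℝ)
    (hPpos : ∀ i x, 0 < P i x) (hPsum : ∀ i, ∑ x, P i x = 1)
    (hQnonneg : ∀ i z x, 0 ≤ Q i z x) (hQsum : ∀ i z, ∑ x, Q i z x = 1) :
    ∑ x : (∀ i, X i),
        ((∑ z, μ z * ∏ i, Q i z (x i)) - ∏ i, P i (x i)) ^ 2 / ∏ i, P i (x i)
      = (∑ z, ∑ z', μ z * μ z' *
          ∏ i, (1 + ∑ y, (Q i z y - P i y) * (Q i z' y - P i y) / P i y)) - 1 := by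
  have hppos : ∀ x : (∀ i, X i), 0 < ∏ i, P i (x i) :=
    fun x => Finset.prod_pos (fun i _ => hPpos i (x i))
  -- Step 1: pointwise expansion of the square
  have step1 : ∀ x : (∀ i, X i),
      ((∑ z, μ z * ∏ i, Q i z (x i)) - ∏ i, P i (x i)) ^ 2 / ∏ i, P i (x i)
      = ∑ z, ∑ z', μ z * μ z' *
          (((∏ i, Q i z (x i)) - ∏ i, P i (x i)) *
           ((∏ i, Q i z' (x i)) - ∏ i, P i (x i)) / ∏ i, P i (x i)) := by
    intro x
    have h1 : (∑ z, μ z * ∏ i, Q i z (x i)) - ∏ i, P i (x i)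
        = ∑ z, μ z * ((∏ i, Q i z (x i)) - ∏ i, P i (x i)) := by
      rw [Finset.sum_congr rfl (fun z _ => mul_sub (μ z) _ _), Finset.sum_sub_distrib,
        ← Finset.sum_mul, hμsum, one_mul]
    rw [h1, sq, Finset.sum_mul_sum, Finset.sum_div]
    refine Finset.sum_congr rfl fun z _ => ?_
    rw [Finset.sum_div]
    refine Finset.sum_congr rfl fun z' _ => ?_
    ring
  rw [Finset.sum_congr rfl (fun x _ => step1 x)]
  rw [Finset.sum_comm]
  rw [Finset.sum_congr rfl (fun z _ => Finset.sum_comm)]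
  -- Step 2: for fixed z, z', evaluate the inner sum over x
  have step2 : ∀ z z' : Z,
      ∑ x : (∀ i, X i),
        (((∏ i, Q i z (x i)) - ∏ i, P i (x i)) *
         ((∏ i, Q i z' (x i)) - ∏ i, P i (x i)) / ∏ i, P i (x i))
      = (∏ i, (1 + ∑ y, (Q i z y - P i y) * (Q i z' y - P i y) / P i y)) - 1 := by
    intro z z'
    have hpt : ∀ x : (∀ i, X i),
        (((∏ i, Q i z (x i)) - ∏ i, P i (x i)) *
         ((∏ i, Q i z' (x i)) - ∏ i, P i (x i)) / ∏ i, P i (x i))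
        = (∏ i, (Q i z (x i) * Q i z' (x i) / P i (x i)))
          - (∏ i, Q i z (x i)) - (∏ i, Q i z' (x i)) + ∏ i, P i (x i) := by
      intro x
      have hprod : (∏ i, (Q i z (x i) * Q i z' (x i) / P i (x i)))
          = (∏ i, Q i z (x i)) * (∏ i, Q i z' (x i)) / ∏ i, P i (x i) := by
        rw [Finset.prod_div_distrib, Finset.prod_mul_distrib]
      rw [hprod]
      have hp := (hppos x).ne'
      field_simp
      ring
    rw [Finset.sum_congr rfl (fun x _ => hpt x)]
    rw [Finset.sum_add_distrib, Finset.sum_sub_distrib, Finset.sum_sub_distrib]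
    rw [sum_pi_prod X (fun i y => Q i z y * Q i z' y / P i y),
      sum_pi_prod X (fun i y => Q i z y), sum_pi_prod X (fun i y => Q i z' y),
      sum_pi_prod X P]
    have hQ1 : (∏ i, ∑ y, Q i z y) = 1 := by
      simp [hQsum]
    have hQ2 : (∏ i, ∑ y, Q i z' y) = 1 := by
      simp [hQsum]
    have hP1 : (∏ i, ∑ y, P i y) = 1 := by
      simp [hPsum]
    rw [hQ1, hQ2, hP1]
    have hi : ∀ i : Fin n, (∑ y, Q i z y * Q i z' y / P i y)
        = 1 + ∑ y, (Q i z y - P i y) * (Q i z' y - P i y) / P i y := by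
      intro i
      have hpt2 : ∀ y : X i, Q i z y * Q i z' y / P i y
          = (Q i z y - P i y) * (Q i z' y - P i y) / P i y + Q i z y + Q i z' y - P i y := by
        intro y
        have hp := (hPpos i y).ne'
        field_simp
        ring
      rw [Finset.sum_congr rfl (fun y _ => hpt2 y)]
      rw [Finset.sum_sub_distrib, Finset.sum_add_distrib, Finset.sum_add_distrib,
        hQsum, hQsum, hPsum]
      ring
    rw [Finset.prod_congr rfl (fun i _ => hi i)]
    ring
  calc ∑ z, ∑ z', ∑ x : (∀ i, X i), μ z * μ z' *
          (((∏ i, Q i z (x i)) - ∏ i, P i (x i)) *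
           ((∏ i, Q i z' (x i)) - ∏ i, P i (x i)) / ∏ i, P i (x i))
      = ∑ z, ∑ z', μ z * μ z' *
          ((∏ i, (1 + ∑ y, (Q i z y - P i y) * (Q i z' y - P i y) / P i y)) - 1) := by
        refine Finset.sum_congr rfl fun z _ => Finset.sum_congr rfl fun z' _ => ?_
        rw [← Finset.mul_sum, step2]
    _ = (∑ z, ∑ z', μ z * μ z' *
          ∏ i, (1 + ∑ y, (Q i z y - P i y) * (Q i z' y - P i y) / P i y)) - 1 := by
        have : ∑ z, ∑ z', μ z * μ z' = 1 := by
          rw [← Finset.sum_mul_sum, hμsum, one_mul]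
        simp only [mul_sub, mul_one, Finset.sum_sub_distrib]
        rw [this]
end
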